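/- Let φ = C1 ∧ ⋯ ∧ Cm be a CNF formula over Boolean variables x1,…,xn in which every clause contains either 2 or 3 literals, every variable occurs in at most 3 clauses, and every variable occurs in at least one clause. Let a, b ∈ Σ be distinct letters and set d := (bab)^n. Define the functional regex formula γ1 := (b·x1{a*}·a*·b)·⋯·(b·xn{a*}·a*·b), and for each clause Ci define the disjunction-free regex formula γ2^i as follows: for a variable index j occurring in Ci let δj := b·xj{ε}·a·b if xj occurs positively in Ci and δj := b·xj{a}·b if ¬xj occurs in Ci; if Ci contains exactly the variable indices i1 < i2, set γ2^i := (bab)^{i1−1}·δ_{i1}·(bab)^{i2−i1−1}·δ_{i2}·(bab)^{n−i2}, and if Ci contains exactly the variable indices i1 < i2 < i3, set γ2^i := (bab)^{i1−1}·δ_{i1}·(bab)^{i2−i1−1}·δ_{i2}·(bab)^{i3−i2−1}·δ_{i3}·(bab)^{n−i3}; finally γ2 := γ2^1 ∨ ⋯ ∨ γ2^m. Then γ1 is functional, each γ2^i is disjunction-free, every variable xj appears in at most 3 of the disjuncts γ2^i, and ⟦γ1 ∖ γ2⟧(d) ≠ ∅ if and only if φ is satisfiable. -/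

import Mathlib

/-!
On `d = (bab)ⁿ` every match of `γ1` and of `γ2^i` is rigid: the `j`-th block of the formula
matches exactly the `j`-th factor `bab` of `d`. So the mappings of `γ1` are the `μ_τ`,
`τ : Fin n → Bool`, where `x_j` spans the empty word before the `a` of factor `j` or that `a`,
according to `τ j`; and `γ2^i` has a single mapping, which sends the variable of each literal of
`C_i` to the span that `μ_τ` takes when `τ` falsifies the literal. Hence `μ_τ` is incompatible with
`γ2^i` iff `τ` satisfies `C_i`, and `μ_τ` survives the difference iff `τ` satisfies `φ`.
-/

namespace Spanners

open scoped Classical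

/-! ### Spans and mappings -/

abbrev Span := ℕ × ℕ

abbrev VMapping := ℕ → Option Span

def emptyMapping : VMapping := fun _ => none

def mapDom (μ : VMapping) : Set ℕ := {x | μ x ≠ none}

/-- Two mappings are compatible if they agree on every common variable. -/
def Compatible (μ1 μ2 : VMapping) : Prop :=
  ∀ x s1 s2, μ1 x = some s1 → μ2 x = some s2 → s1 = s2

def DisjointDom (μ1 μ2 : VMapping) : Prop :=
  ∀ x, μ1 x = none ∨ μ2 x = none

def munion (μ1 μ2 : VMapping) : VMapping := fun x =>
  match μ1 x with
  | some s => some s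
  | none => μ2 x

def minsert (x : ℕ) (s : Span) (μ : VMapping) : VMapping :=
  fun y => if y = x then some s else μ y

/-- Natural join of two sets of mappings. -/
def joinSet (S1 S2 : Set VMapping) : Set VMapping :=
  {μ | ∃ μ1 ∈ S1, ∃ μ2 ∈ S2, Compatible μ1 μ2 ∧ μ = munion μ1 μ2}

/-- Difference of two sets of mappings. -/
def diffSet (S1 S2 : Set VMapping) : Set VMapping :=
  {μ1 | μ1 ∈ S1 ∧ ∀ μ2 ∈ S2, ¬ Compatible μ1 μ2}

/-- Restriction of a mapping to a set of variables. -/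
noncomputable def restrictMap (μ : VMapping) (V : Set ℕ) : VMapping :=
  fun x => if x ∈ V then μ x else none

/-- Projection of a set of mappings to a set of variables. -/
def projSet (V : Set ℕ) (S : Set VMapping) : Set VMapping :=
  {μ' | ∃ μ ∈ S, μ' = restrictMap μ V}

/-! ### Regex formulas -/

inductive RGX (Sig : Type) where
  | empty : RGX Sig
  | eps : RGX Sig
  | letter : Sig → RGX Sig
  | union : RGX Sig → RGX Sig → RGX Sig
  | concat : RGX Sig → RGX Sig → RGX Sig
  | star : RGX Sig → RGX Sig
  | bind : ℕ → RGX Sig → RGX Sig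

variable {Sig : Type}

def RGX.vars : RGX Sig → Finset ℕ
  | .empty => ∅
  | .eps => ∅
  | .letter _ => ∅
  | .union a b => a.vars ∪ b.vars
  | .concat a b => a.vars ∪ b.vars
  | .star a => a.vars
  | .bind x a => insert x a.vars

def RGX.size : RGX Sig → ℕ
  | .empty => 1
  | .eps => 1
  | .letter _ => 1
  | .union a b => a.size + b.size + 1
  | .concat a b => a.size + b.size + 1
  | .star a => a.size + 1
  | .bind _ a => a.size + 1

/-- The schemaless semantics `⟨α⟩(d)`: `RMatch α d i j μ` means `([i,j⟩, μ) ∈ ⟨α⟩(d)`. -/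
inductive RMatch : RGX Sig → List Sig → ℕ → ℕ → VMapping → Prop where
  | eps {d : List Sig} {i : ℕ} (h1 : 1 ≤ i) (h2 : i ≤ d.length + 1) :
      RMatch .eps d i i emptyMapping
  | letter {d : List Sig} {i : ℕ} {σ : Sig} (h1 : 1 ≤ i) (h2 : d[i - 1]? = some σ) :
      RMatch (.letter σ) d i (i + 1) emptyMapping
  | unionL {a b : RGX Sig} {d : List Sig} {i j : ℕ} {μ : VMapping}
      (h : RMatch a d i j μ) : RMatch (.union a b) d i j μ
  | unionR {a b : RGX Sig} {d : List Sig} {i j : ℕ} {μ : VMapping}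
      (h : RMatch b d i j μ) : RMatch (.union a b) d i j μ
  | concat {a b : RGX Sig} {d : List Sig} {i k j : ℕ} {μ1 μ2 : VMapping}
      (h1 : RMatch a d i k μ1) (h2 : RMatch b d k j μ2) (hd : DisjointDom μ1 μ2) :
      RMatch (.concat a b) d i j (munion μ1 μ2)
  | bind {x : ℕ} {a : RGX Sig} {d : List Sig} {i j : ℕ} {μ : VMapping}
      (h : RMatch a d i j μ) (hx : μ x = none) :
      RMatch (.bind x a) d i j (minsert x (i, j) μ)
  | starNil {a : RGX Sig} {d : List Sig} {i : ℕ} (h1 : 1 ≤ i) (h2 : i ≤ d.length + 1) :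
      RMatch (.star a) d i i emptyMapping
  | starCons {a : RGX Sig} {d : List Sig} {i k j : ℕ} {μ1 μ2 : VMapping}
      (h1 : RMatch a d i k μ1) (h2 : RMatch (.star a) d k j μ2) (hd : DisjointDom μ1 μ2) :
      RMatch (.star a) d i j (munion μ1 μ2)

/-- `⟦α⟧(d)`: mappings extracted with the full span. -/
def rgxSem (α : RGX Sig) (d : List Sig) : Set VMapping :=
  {μ | RMatch α d 1 (d.length + 1) μ}

/-- Sequential regex formulas. -/
def RGX.Sequential : RGX Sig → Prop
  | .empty => True
  | .eps => True
  | .letter _ => True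
  | .union a b => a.Sequential ∧ b.Sequential
  | .concat a b => a.Sequential ∧ b.Sequential ∧ Disjoint a.vars b.vars
  | .star a => a.Sequential ∧ a.vars = ∅
  | .bind x a => a.Sequential ∧ x ∉ a.vars

/-- Variable-free words over the alphabet (built from ε, letters and concatenation). -/
inductive RGX.IsWord : RGX Sig → Prop where
  | eps : RGX.IsWord .eps
  | letter (σ : Sig) : RGX.IsWord (.letter σ)
  | concat {a b : RGX Sig} : a.IsWord → b.IsWord → RGX.IsWord (.concat a b)

/-- Functional for a set `V` of variables. -/
inductive FunctionalFor : RGX Sig → Finset ℕ → Prop where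
  | word {α : RGX Sig} (h : α.IsWord) : FunctionalFor α ∅
  | union {a b : RGX Sig} {V : Finset ℕ} (ha : FunctionalFor a V) (hb : FunctionalFor b V) :
      FunctionalFor (.union a b) V
  | concat {a b : RGX Sig} {V : Finset ℕ} (V1 : Finset ℕ) (hsub : V1 ⊆ V)
      (ha : FunctionalFor a V1) (hb : FunctionalFor b (V \ V1)) :
      FunctionalFor (.concat a b) V
  | star {a : RGX Sig} (h : FunctionalFor a ∅) : FunctionalFor (.star a) ∅
  | bind {x : ℕ} {a : RGX Sig} {V : Finset ℕ} (h : FunctionalFor a (V.erase x)) :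
      FunctionalFor (.bind x a) V

def RGX.Functional (α : RGX Sig) : Prop := FunctionalFor α α.vars

/-- Disjunctive functional regex formulas: finite disjunctions of functional regex formulas. -/
inductive DisjFunctional : RGX Sig → Prop where
  | base {γ : RGX Sig} (h : γ.Functional) : DisjFunctional γ
  | union {a b : RGX Sig} (ha : DisjFunctional a) (hb : DisjFunctional b) :
      DisjFunctional (.union a b)

/-- Number of disjuncts of a (disjunctive) regex formula. -/
def countDisjuncts : RGX Sig → ℕ
  | .union a b => countDisjuncts a + countDisjuncts b
  | _ => 1

/-- Disjunction-free regex formulas. -/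
def RGX.DisjFree : RGX Sig → Prop
  | .union _ _ => False
  | .concat a b => a.DisjFree ∧ b.DisjFree
  | .star a => a.DisjFree
  | .bind _ a => a.DisjFree
  | _ => True

/-- `γ` is synchronized for `x`: no subformula `γ1 ∨ γ2` contains `x`. -/
def RGX.SyncFor : RGX Sig → ℕ → Prop
  | .union a b, x => (x ∉ a.vars ∧ x ∉ b.vars) ∧ a.SyncFor x ∧ b.SyncFor x
  | .concat a b, x => a.SyncFor x ∧ b.SyncFor x
  | .star a, x => a.SyncFor x
  | .bind _ a, x => a.SyncFor x
  | _, _ => True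

/-- Concatenation of a list of regex formulas. -/
def concatList : List (RGX Sig) → RGX Sig
  | [] => .eps
  | [α] => α
  | α :: rest => .concat α (concatList rest)

/-- Disjunction of a list of regex formulas. -/
def disjList : List (RGX Sig) → RGX Sig
  | [] => .empty
  | [α] => α
  | α :: rest => .union α (disjList rest)

/-! ### vset-automata -/

inductive VLabel (Sig : Type) where
  | eps : VLabel Sig
  | letter : Sig → VLabel Sig
  | openv : ℕ → VLabel Sig
  | closev : ℕ → VLabel Sig
deriving DecidableEq

structure VA (Sig : Type) [DecidableEq Sig] where
  q0 : ℕ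
  F : Finset ℕ
  δ : Finset (ℕ × VLabel Sig × ℕ)

variable [DecidableEq Sig]

/-- The states of a VA: the initial state and all states mentioned in `F` or in transitions. -/
def statesOf (A : VA Sig) : Finset ℕ :=
  insert A.q0 (A.F ∪ A.δ.image (fun t => t.1) ∪ A.δ.image (fun t => t.2.2))

def labelVars : VLabel Sig → Finset ℕ
  | .openv x => {x}
  | .closev x => {x}
  | _ => ∅

/-- `Vars(A)`: the variables mentioned in the transitions of `A`. -/
def varsOf (A : VA Sig) : Finset ℕ := A.δ.biUnion (fun t => labelVars t.2.1)

/-- Total size of a VA: number of states plus number of transitions. -/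
def vaSize (A : VA Sig) : ℕ := (statesOf A).card + A.δ.card

/-- `A.PathFrom p ls q`: a path (run segment) from `p` to `q` with label sequence `ls`. -/
inductive VA.PathFrom (A : VA Sig) : ℕ → List (VLabel Sig) → ℕ → Prop where
  | nil (q : ℕ) : VA.PathFrom A q [] q
  | cons {p q r : ℕ} {l : VLabel Sig} {ls : List (VLabel Sig)}
      (h : (p, l, q) ∈ A.δ) (htail : VA.PathFrom A q ls r) : VA.PathFrom A p (l :: ls) r

/-- The word (document) read by a sequence of labels. -/
def readWord : List (VLabel Sig) → List Sig :=
  List.filterMap fun l => match l with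
    | VLabel.letter σ => some σ
    | _ => none

def isLetterL : VLabel Sig → Bool
  | .letter _ => true
  | _ => false

/-- The current position in the document just before executing the `k`-th label. -/
def posAt (ls : List (VLabel Sig)) (k : ℕ) : ℕ := 1 + (ls.take k).countP isLetterL

/-- Validity of a run, given by its label sequence. -/
def ValidLabels (ls : List (VLabel Sig)) : Prop :=
  ∀ x : ℕ,
    ls.count (VLabel.openv x) ≤ 1 ∧
    ls.count (VLabel.closev x) ≤ 1 ∧
    ((VLabel.openv x) ∈ ls ↔ (VLabel.closev x) ∈ ls) ∧
    ∀ i j : ℕ, ls[i]? = some (VLabel.openv x) → ls[j]? = some (VLabel.closev x) →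
      posAt ls i ≤ posAt ls j

/-- The mapping `μ_ρ` extracted from a (valid accepting) run with label sequence `ls`. -/
def runMapping (ls : List (VLabel Sig)) : VMapping := fun x =>
  if (VLabel.openv x) ∈ ls then
    some (posAt ls (ls.idxOf (VLabel.openv x)), posAt ls (ls.idxOf (VLabel.closev x)))
  else none

/-- `ls` is the label sequence of an accepting run of `A`. -/
def AcceptsWith (A : VA Sig) (ls : List (VLabel Sig)) : Prop :=
  ∃ qf, VA.PathFrom A A.q0 ls qf ∧ qf ∈ A.F

/-- `⟦A⟧(d)`. -/
def vaSem (A : VA Sig) (d : List Sig) : Set VMapping :=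
  {μ | ∃ ls, AcceptsWith A ls ∧ readWord ls = d ∧ ValidLabels ls ∧ μ = runMapping ls}

/-- A VA is sequential if all of its accepting runs are valid. -/
def VA.Sequential (A : VA Sig) : Prop := ∀ ls, AcceptsWith A ls → ValidLabels ls

/-- A run from the initial state to `q` that is a prefix of an accepting run. -/
def PrefixRun (A : VA Sig) (ls : List (VLabel Sig)) (q : ℕ) : Prop :=
  VA.PathFrom A A.q0 ls q ∧ ∃ ls' qf, VA.PathFrom A q ls' qf ∧ qf ∈ A.F

/-- `A` is semi-functional for the variable `x`: no state has extended configuration `d`. -/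
def SemiFunctionalFor (A : VA Sig) (x : ℕ) : Prop :=
  ¬ ∃ q ls1 ls2, PrefixRun A ls1 q ∧ PrefixRun A ls2 q ∧
      (VLabel.closev x) ∈ ls1 ∧ (VLabel.openv x) ∉ ls2

def SemiFunctionalForSet (A : VA Sig) (X : Finset ℕ) : Prop :=
  ∀ x ∈ X, SemiFunctionalFor A x

/-- Functional VA: sequential, and every accepting run opens and closes every variable. -/
def FunctionalVA (A : VA Sig) : Prop :=
  A.Sequential ∧ ∀ ls, AcceptsWith A ls → ∀ x ∈ varsOf A,
    (VLabel.openv x) ∈ ls ∧ (VLabel.closev x) ∈ ls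

/-- `l` has a unique target state in `A`. -/
def UniqueTarget (A : VA Sig) (l : VLabel Sig) : Prop :=
  ∃ qt : ℕ, ∀ p q : ℕ, (p, l, q) ∈ A.δ → q = qt

/-- `A` is synchronized for the variable `x`. -/
def SyncForVA (A : VA Sig) (x : ℕ) : Prop :=
  UniqueTarget A (VLabel.openv x) ∧ UniqueTarget A (VLabel.closev x) ∧
    ((∀ ls, AcceptsWith A ls → (VLabel.openv x) ∈ ls ∧ (VLabel.closev x) ∈ ls) ∨
     (∀ ls, AcceptsWith A ls → (VLabel.openv x) ∉ ls ∧ (VLabel.closev x) ∉ ls))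

/-- `A` is the disjunctive functional VA with functional components `parts`. -/
def DisjFunctionalVAWith (A : VA Sig) (parts : List (VA Sig)) : Prop :=
  (∀ B ∈ parts, FunctionalVA B) ∧
  (parts.Pairwise fun B C => Disjoint (statesOf B) (statesOf C)) ∧
  (∀ B ∈ parts, A.q0 ∉ statesOf B) ∧
  A.F = parts.foldr (fun B s => B.F ∪ s) (∅ : Finset ℕ) ∧
  A.δ = (parts.map (fun B => (A.q0, (VLabel.eps : VLabel Sig), B.q0))).toFinset
        ∪ parts.foldr (fun B s => B.δ ∪ s) (∅ : Finset (ℕ × VLabel Sig × ℕ))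

def DisjFunctionalVA (A : VA Sig) : Prop := ∃ parts, DisjFunctionalVAWith A parts

/-! ### 3CNF formulas -/

/-- A 3CNF clause over `n` Boolean variables: a triple of literals; `(i, true)` is `xᵢ`,
`(i, false)` is `¬xᵢ`. -/
def Clause3 (n : ℕ) : Type := (Fin n × Bool) × (Fin n × Bool) × (Fin n × Bool)

def litsOf {n : ℕ} (c : Clause3 n) : List (Fin n × Bool) := [c.1, c.2.1, c.2.2]

def clauseSat {n : ℕ} (τ : Fin n → Bool) (c : Clause3 n) : Prop :=
  ∃ l ∈ litsOf c, τ l.1 = l.2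

def Sat3 {n m : ℕ} (φ : Fin m → Clause3 n) : Prop :=
  ∃ τ : Fin n → Bool, ∀ j, clauseSat τ (φ j)

end Spanners

namespace Spanners

variable {Sig : Type}

/-- The block `bab`. -/
def babS19 (a b : Sig) : RGX Sig := .concat (.letter b) (.concat (.letter a) (.letter b))

/-- `γ1 := (b·x1{a*}·a*·b)·⋯·(b·xn{a*}·a*·b)`. -/
def gamma1S19 (a b : Sig) (n : ℕ) : RGX Sig :=
  concatList (List.ofFn fun j : Fin n =>
    RGX.concat (.letter b) (.concat (.bind (j : ℕ) (.star (.letter a)))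
      (.concat (.star (.letter a)) (.letter b))))

/-- The `j`-th block of `γ2^i`: `δ_j = b·x_j{ε}·a·b` if `x_j` occurs positively in the
clause, `δ_j = b·x_j{a}·b` if `¬x_j` occurs, and `bab` if `x_j` does not occur. -/
def blockS19 (a b : Sig) {n : ℕ} (c : List (Fin n × Bool)) (j : Fin n) : RGX Sig :=
  match c.find? (fun l => decide (l.1 = j)) with
  | some l =>
      if l.2 then
        .concat (.letter b) (.concat (.bind (j : ℕ) .eps) (.concat (.letter a) (.letter b)))
      else
        .concat (.letter b) (.concat (.bind (j : ℕ) (.letter a)) (.letter b))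
  | none => babS19 a b

/-- `γ2^i`. -/
def gamma2iS19 (a b : Sig) {n : ℕ} (c : List (Fin n × Bool)) : RGX Sig :=
  concatList (List.ofFn fun j : Fin n => blockS19 a b c j)

/-- `γ2 := γ2^1 ∨ ⋯ ∨ γ2^m`. -/
def gamma2S19 (a b : Sig) {n : ℕ} (φ : List (List (Fin n × Bool))) : RGX Sig :=
  disjList (φ.map (gamma2iS19 a b))

@[simp]
lemma emptyMapping_apply (x : ℕ) : emptyMapping x = none := rfl

@[simp]
lemma munion_apply (μ1 μ2 : VMapping) (x : ℕ) : munion μ1 μ2 x = (μ1 x).or (μ2 x) := by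
  unfold munion; cases μ1 x <;> rfl

@[simp]
lemma munion_emptyMapping_left (μ : VMapping) : munion emptyMapping μ = μ := rfl

@[simp]
lemma disjointDom_emptyMapping_left (μ : VMapping) : DisjointDom emptyMapping μ :=
  fun _ => .inl rfl

@[simp]
lemma disjointDom_emptyMapping_right (μ : VMapping) : DisjointDom μ emptyMapping :=
  fun _ => .inr rfl

@[simp]
lemma minsert_emptyMapping (x : ℕ) (s : Span) :
    minsert x s emptyMapping = Function.update emptyMapping x (some s) := by
  funext y; simp [minsert, Function.update_apply]

@[simp]
lemma munion_emptyMapping_right (μ : VMapping) : munion μ emptyMapping = μ := by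
  funext x; simp

lemma disjointDom_update_restrictMap_Ico (k m : ℕ) (v : Option Span) (o : ℕ → Option Span) :
    DisjointDom (Function.update emptyMapping k v) (restrictMap o (Set.Ico (k + 1) m)) := by
  intro x
  by_cases hx : x = k
  · subst hx; simp [restrictMap]
  · simp [hx]

lemma munion_update_restrictMap_Ico {k m : ℕ} (hkm : k < m) (v : Option Span)
    (o : ℕ → Option Span) :
    munion (Function.update emptyMapping k v) (restrictMap o (Set.Ico (k + 1) m)) =
      restrictMap (Function.update o k v) (Set.Ico k m) := by
  funext x
  by_cases hx : x = k
  · subst hx; simp [restrictMap, hkm]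
  · have : k + 1 ≤ x ∧ x < m ↔ k ≤ x ∧ x < m := by omega
    simp only [restrictMap, Set.mem_Ico, munion_apply, Function.update_apply, hx, if_false,
      emptyMapping_apply, Option.none_or, this]

lemma restrictMap_Ico_zero_eq {n : ℕ} {o μ : VMapping} (ho : ∀ x < n, o x = μ x)
    (hμ : ∀ x, n ≤ x → μ x = none) : restrictMap o (Set.Ico 0 n) = μ := by
  funext x
  by_cases hx : x < n
  · simp [restrictMap, hx, ho x hx]
  · simp [restrictMap, hx, hμ x (not_lt.mp hx)]

section Matching

variable {d : List Sig} {i j : ℕ} {μ : VMapping}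

lemma RMatch.bounds {α : RGX Sig} (h : RMatch α d i j μ) :
    1 ≤ i ∧ i ≤ j ∧ j ≤ d.length + 1 := by
  induction h with
  | letter h1 h2 => have := (List.getElem?_eq_some_iff.mp h2).1; omega
  | concat _ _ _ ih1 ih2 | starCons _ _ _ ih1 ih2 => omega
  | unionL _ ih | unionR _ ih | bind _ _ ih => exact ih
  | eps h1 h2 | starNil h1 h2 => exact ⟨h1, le_rfl, h2⟩

lemma rmatch_eps_iff :
    RMatch (.eps : RGX Sig) d i j μ ↔ j = i ∧ μ = emptyMapping ∧ 1 ≤ i ∧ i ≤ d.length + 1 := by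
  constructor
  · intro h; cases h with | eps h1 h2 => exact ⟨rfl, rfl, h1, h2⟩
  · rintro ⟨rfl, rfl, h1, h2⟩; exact .eps h1 h2

lemma rmatch_letter_iff {σ : Sig} :
    RMatch (.letter σ) d i j μ ↔ j = i + 1 ∧ μ = emptyMapping ∧ 1 ≤ i ∧ d[i - 1]? = some σ := by
  constructor
  · intro h; cases h with | letter h1 h2 => exact ⟨rfl, rfl, h1, h2⟩
  · rintro ⟨rfl, rfl, h1, h2⟩; exact .letter h1 h2

lemma rmatch_concat_iff {α β : RGX Sig} :
    RMatch (.concat α β) d i j μ ↔ ∃ k μ1 μ2, RMatch α d i k μ1 ∧ RMatch β d k j μ2 ∧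
      DisjointDom μ1 μ2 ∧ μ = munion μ1 μ2 := by
  constructor
  · intro h; cases h with | concat h1 h2 hd => exact ⟨_, _, _, h1, h2, hd, rfl⟩
  · rintro ⟨k, μ1, μ2, h1, h2, hd, rfl⟩; exact .concat h1 h2 hd

lemma rmatch_bind_iff {x : ℕ} {α : RGX Sig} :
    RMatch (.bind x α) d i j μ ↔ ∃ μ0, RMatch α d i j μ0 ∧ μ0 x = none ∧
      μ = minsert x (i, j) μ0 := by
  constructor
  · intro h; cases h with | bind h hx => exact ⟨_, h, hx, rfl⟩
  · rintro ⟨μ0, h, hx, rfl⟩; exact .bind h hx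

lemma rmatch_union_iff {α β : RGX Sig} :
    RMatch (.union α β) d i j μ ↔ RMatch α d i j μ ∨ RMatch β d i j μ := by
  constructor
  · intro h
    cases h with
    | unionL h => exact .inl h
    | unionR h => exact .inr h
  · rintro (h | h)
    · exact .unionL h
    · exact .unionR h

lemma rmatch_letter_concat_iff {σ : Sig} {β : RGX Sig} :
    RMatch (.concat (.letter σ) β) d i j μ ↔
      1 ≤ i ∧ d[i - 1]? = some σ ∧ RMatch β d (i + 1) j μ := by
  simp only [rmatch_concat_iff, rmatch_letter_iff]
  constructor
  · rintro ⟨_, _, μ2, ⟨rfl, rfl, h1, h2⟩, h, -, rfl⟩; exact ⟨h1, h2, h⟩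
  · rintro ⟨h1, h2, h⟩; exact ⟨_, _, μ, ⟨rfl, rfl, h1, h2⟩, h, fun _ => .inl rfl, rfl⟩

lemma rmatch_star_letter_iff {σ : Sig} :
    RMatch (.star (.letter σ)) d i j μ ↔ μ = emptyMapping ∧ 1 ≤ i ∧ i ≤ j ∧
      j ≤ d.length + 1 ∧ ∀ t, i ≤ t → t < j → d[t - 1]? = some σ := by
  constructor
  · intro h
    generalize hα : (RGX.star (.letter σ) : RGX Sig) = α at h
    induction h with
    | starNil h1 h2 => exact ⟨rfl, h1, le_rfl, h2, fun t _ _ => by omega⟩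
    | starCons h1 h2 _ _ ih =>
      cases hα
      obtain ⟨rfl, rfl, hi, hσ⟩ := rmatch_letter_iff.mp h1
      obtain ⟨rfl, -, hij, hj, hall⟩ := ih rfl
      refine ⟨rfl, hi, by omega, hj, fun t ht1 ht2 => ?_⟩
      rcases ht1.eq_or_lt with rfl | ht1
      · exact hσ
      · exact hall t ht1 ht2
    | _ => cases hα
  · rintro ⟨rfl, hi, hij, hj, hall⟩
    obtain ⟨m, rfl⟩ := Nat.exists_eq_add_of_le hij
    induction m generalizing i with
    | zero => exact .starNil hi (by omega)
    | succ m ih =>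
      have hrest := ih (i := i + 1) (by omega) (by omega) (by omega)
        (fun t ht1 ht2 => hall t (by omega) (by omega))
      have := RMatch.starCons (.letter hi (hall i le_rfl (by omega))) hrest (fun _ => .inl rfl)
      rwa [show i + 1 + m = i + (m + 1) by omega] at this

lemma rmatch_concatList_cons_iff {α : RGX Sig} {L : List (RGX Sig)} :
    RMatch (concatList (α :: L)) d i j μ ↔ ∃ k μ1 μ2, RMatch α d i k μ1 ∧
      RMatch (concatList L) d k j μ2 ∧ DisjointDom μ1 μ2 ∧ μ = munion μ1 μ2 := by
  cases L with
  | cons β L => exact rmatch_concat_iff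
  | nil =>
    simp only [concatList, rmatch_eps_iff]
    constructor
    · intro h
      have := h.bounds
      exact ⟨j, μ, _, h, ⟨rfl, rfl, by omega, by omega⟩, fun _ => .inr rfl,
        (munion_emptyMapping_right μ).symm⟩
    · rintro ⟨k, μ1, _, h, ⟨rfl, rfl, -⟩, -, rfl⟩
      rwa [munion_emptyMapping_right]

lemma rmatch_disjList_iff {L : List (RGX Sig)} :
    RMatch (disjList L) d i j μ ↔ ∃ α ∈ L, RMatch α d i j μ := by
  match L with
  | [] => simp only [disjList, List.not_mem_nil, false_and, exists_false, iff_false]; nofun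
  | [α] => simp [disjList]
  | α :: β :: L => simp [disjList, rmatch_union_iff, rmatch_disjList_iff (L := β :: L)]

lemma rmatch_concatList_iff_of_blocks {pos : ℕ → ℕ} {S : ℕ → Set (Option Span)}
    (hpos : ∀ x, 1 ≤ pos x) (L : List (RGX Sig)) (k : ℕ)
    (hend : pos (k + L.length) ≤ d.length + 1)
    (hL : ∀ i (hi : i < L.length) q μ, RMatch L[i] d (pos (k + i)) q μ ↔
      q = pos (k + i + 1) ∧ ∃ o ∈ S (k + i), μ = Function.update emptyMapping (k + i) o)
    (q : ℕ) (μ : VMapping) :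
    RMatch (concatList L) d (pos k) q μ ↔ q = pos (k + L.length) ∧
      ∃ o : ℕ → Option Span, (∀ x ∈ Set.Ico k (k + L.length), o x ∈ S x) ∧
        μ = restrictMap o (Set.Ico k (k + L.length)) := by
  induction L generalizing k q μ with
  | nil =>
    simp only [List.length_nil, add_zero, Set.Ico_self] at hend ⊢
    have hempty (o : ℕ → Option Span) : restrictMap o ∅ = emptyMapping := by
      funext x; simp [restrictMap]
    simp only [concatList, rmatch_eps_iff, hpos, hend, and_true, hempty, Set.mem_empty_iff_false,
      IsEmpty.forall_iff, implies_true, true_and, exists_const]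
  | cons α L ih =>
    have hhead := hL 0 (by simp)
    simp only [List.getElem_cons_zero, add_zero] at hhead
    have htail := ih (k + 1) (by rwa [List.length_cons, ← add_assoc, add_right_comm] at hend)
      fun i hi q μ => by
        have := hL (i + 1) (by simpa using hi) q μ
        rwa [List.getElem_cons_succ, ← add_assoc, add_right_comm k i 1] at this
    have hkm : k < k + 1 + L.length := by omega
    rw [rmatch_concatList_cons_iff, List.length_cons, ← add_assoc, add_right_comm k]
    constructor
    · rintro ⟨_, _, _, h1, h2, -, rfl⟩
      obtain ⟨rfl, o0, ho0, rfl⟩ := (hhead _ _).mp h1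
      obtain ⟨rfl, o, ho, rfl⟩ := (htail _ _).mp h2
      refine ⟨rfl, Function.update o k o0, fun x hx => ?_, munion_update_restrictMap_Ico hkm _ _⟩
      by_cases hxk : x = k
      · subst hxk; simpa using ho0
      · simpa [hxk] using ho x ⟨by have := hx.1; omega, hx.2⟩
    · rintro ⟨rfl, o, ho, rfl⟩
      refine ⟨pos (k + 1), _, _,
        (hhead _ _).mpr ⟨rfl, o k, ho k ⟨le_rfl, hkm⟩, rfl⟩,
        (htail _ _).mpr ⟨rfl, o, fun x hx => ho x ⟨by have := hx.1; omega, hx.2⟩, rfl⟩,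
        disjointDom_update_restrictMap_Ico _ _ _ _, ?_⟩
      rw [munion_update_restrictMap_Ico hkm, Function.update_eq_self]

end Matching

lemma mem_rgxSem_concatList_ofFn_iff {n w : ℕ} {d : List Sig} (hd : d.length = w * n)
    (B : Fin n → RGX Sig) (S : ℕ → Set (Option Span))
    (hB : ∀ (x : Fin n) j μ, RMatch (B x) d (w * x + 1) j μ ↔
      j = w * (x + 1) + 1 ∧ ∃ o ∈ S x, μ = Function.update emptyMapping x o) {μ : VMapping} :
    μ ∈ rgxSem (concatList (List.ofFn B)) d ↔
      ∃ o : VMapping, (∀ x < n, o x ∈ S x) ∧ μ = restrictMap o (Set.Ico 0 n) := by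
  have := rmatch_concatList_iff_of_blocks (d := d) (pos := fun x => w * x + 1) (S := S) (by simp)
    (List.ofFn B) 0 (by simp [hd]) (fun i hi j μ => by simpa using hB ⟨i, by simpa using hi⟩ j μ)
    (d.length + 1) μ
  simpa [rgxSem, hd] using this

lemma RGX.Functional.concat {α β : RGX Sig} (hα : α.Functional) (hβ : β.Functional)
    (hαβ : Disjoint α.vars β.vars) : (RGX.concat α β).Functional := by
  refine FunctionalFor.concat α.vars Finset.subset_union_left hα ?_
  rwa [RGX.vars, Finset.union_sdiff_cancel_left hαβ]

lemma mem_vars_concatList {x : ℕ} :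
    ∀ {L : List (RGX Sig)}, x ∈ (concatList L).vars ↔ ∃ α ∈ L, x ∈ α.vars
  | [] => by simp [concatList, RGX.vars]
  | [α] => by simp [concatList]
  | α :: β :: L => by
    change x ∈ α.vars ∪ (concatList (β :: L)).vars ↔ _
    rw [Finset.mem_union, mem_vars_concatList]
    simp

lemma functional_concatList :
    ∀ {L : List (RGX Sig)}, (∀ α ∈ L, α.Functional) →
      L.Pairwise (fun α β => Disjoint α.vars β.vars) → (concatList L).Functional
  | [], _, _ => FunctionalFor.word .eps
  | [α], h, _ => h α (by simp)
  | α :: β :: L, h, hL => by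
    rw [List.pairwise_cons] at hL
    refine .concat (h α (by simp)) (functional_concatList (fun γ hγ => h γ (by simp [hγ])) hL.2) ?_
    rw [Finset.disjoint_left]
    intro x hxα hx
    obtain ⟨γ, hγ, hxγ⟩ := mem_vars_concatList.mp hx
    exact Finset.disjoint_left.mp (hL.1 γ hγ) hxα hxγ

lemma disjFree_concatList :
    ∀ {L : List (RGX Sig)}, (∀ α ∈ L, α.DisjFree) → (concatList L).DisjFree
  | [], _ => trivial
  | [α], h => h α (by simp)
  | α :: β :: L, h => ⟨h α (by simp), disjFree_concatList fun γ hγ => h γ (by simp [hγ])⟩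

lemma _root_.List.getElem?_flatten_replicate {α : Type*} (l : List α) {n x : ℕ} (hx : x < n)
    (r : ℕ) (hr : r < l.length) : (List.replicate n l).flatten[l.length * x + r]? = l[r]? := by
  induction n generalizing x with
  | zero => omega
  | succ n ih =>
    rw [List.replicate_succ, List.flatten_cons]
    rcases x with _ | x
    · simp [List.getElem?_append_left hr]
    · rw [List.getElem?_append_right (by nlinarith), ← ih (x := x) (by omega)]
      congr 1
      ring_nf; omega

section Document

def babPow (a b : Sig) (n : ℕ) : List Sig := (List.replicate n [b, a, b]).flatten

variable {a b : Sig} {n x : ℕ}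

lemma length_babPow : (babPow a b n).length = 3 * n := by
  simp [babPow, mul_comm]

lemma babPow_getElem?_left (hx : x < n) : (babPow a b n)[3 * x]? = some b :=
  List.getElem?_flatten_replicate [b, a, b] hx 0 (by simp)

lemma babPow_getElem?_mid (hx : x < n) : (babPow a b n)[3 * x + 1]? = some a :=
  List.getElem?_flatten_replicate [b, a, b] hx 1 (by simp)

lemma babPow_getElem?_right (hx : x < n) : (babPow a b n)[3 * x + 2]? = some b :=
  List.getElem?_flatten_replicate [b, a, b] hx 2 (by simp)

end Document

/-- Block `x` of `babPow a b n` occupies the positions `3x+1, 3x+2, 3x+3`, with its `a` at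
`3x+2`; `blockSpan x t` opens just before that `a` and contains it iff `t`. -/
def blockSpan (x : ℕ) (t : Bool) : Span := (3 * x + 2, if t then 3 * x + 3 else 3 * x + 2)

lemma blockSpan_injective (x : ℕ) : Function.Injective (blockSpan x) := by
  intro t t' h
  cases t <;> cases t' <;> simp_all [blockSpan]

def gamma1Block (a b : Sig) (x : ℕ) : RGX Sig :=
  .concat (.letter b)
    (.concat (.bind x (.star (.letter a))) (.concat (.star (.letter a)) (.letter b)))

section Gamma1

variable {a b : Sig} {n x : ℕ} {i j : ℕ} {μ : VMapping}

lemma rmatch_star_babPow_iff (hab : a ≠ b) (hx : x < n) (hi : 3 * x + 2 ≤ i)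
    (hi' : i ≤ 3 * x + 3) :
    RMatch (.star (.letter a)) (babPow a b n) i j μ ↔ μ = emptyMapping ∧ i ≤ j ∧ j ≤ 3 * x + 3 := by
  rw [rmatch_star_letter_iff, length_babPow]
  constructor
  · rintro ⟨rfl, -, hij, -, hall⟩
    refine ⟨rfl, hij, not_lt.mp fun hj => hab ?_⟩
    have := hall (3 * x + 3) hi' hj
    rw [show 3 * x + 3 - 1 = 3 * x + 2 by omega, babPow_getElem?_right hx] at this
    exact (Option.some.inj this).symm
  · rintro ⟨rfl, hij, hj⟩
    refine ⟨rfl, by omega, hij, by omega, fun t ht ht' => ?_⟩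
    rw [show t - 1 = 3 * x + 1 by omega]
    exact babPow_getElem?_mid hx

lemma rmatch_star_concat_letter_babPow_iff (hab : a ≠ b) (hx : x < n) (hi : 3 * x + 2 ≤ i)
    (hi' : i ≤ 3 * x + 3) :
    RMatch (.concat (.star (.letter a)) (.letter b)) (babPow a b n) i j μ ↔
      j = 3 * (x + 1) + 1 ∧ μ = emptyMapping := by
  simp only [rmatch_concat_iff, rmatch_star_babPow_iff hab hx hi hi', rmatch_letter_iff]
  constructor
  · rintro ⟨k, _, _, ⟨rfl, hik, hk⟩, ⟨rfl, rfl, -, hkb⟩, -, rfl⟩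
    obtain rfl : k = 3 * x + 3 := by
      refine le_antisymm hk (not_lt.mp fun hk' => hab ?_)
      rw [show k - 1 = 3 * x + 1 by omega, babPow_getElem?_mid hx] at hkb
      exact Option.some.inj hkb
    exact ⟨by ring, rfl⟩
  · rintro ⟨rfl, rfl⟩
    refine ⟨3 * x + 3, _, _, ⟨rfl, hi', le_rfl⟩, ⟨by ring, rfl, by omega, ?_⟩,
      fun _ => .inl rfl, rfl⟩
    exact babPow_getElem?_right hx

lemma rmatch_gamma1Block_iff (hab : a ≠ b) (hx : x < n) :
    RMatch (gamma1Block a b x) (babPow a b n) (3 * x + 1) j μ ↔ j = 3 * (x + 1) + 1 ∧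
      ∃ o ∈ Set.range (some ∘ blockSpan x), μ = Function.update emptyMapping x o := by
  rw [gamma1Block, rmatch_letter_concat_iff, Nat.add_sub_cancel, babPow_getElem?_left hx,
    rmatch_concat_iff]
  simp only [le_add_iff_nonneg_left, zero_le, true_and, rmatch_bind_iff]
  constructor
  · rintro ⟨k, _, _, ⟨_, hstar, -, rfl⟩, htail, -, rfl⟩
    obtain ⟨rfl, hk, hk'⟩ := (rmatch_star_babPow_iff hab hx (by omega) (by omega)).mp hstar
    obtain ⟨rfl, rfl⟩ := (rmatch_star_concat_letter_babPow_iff hab hx hk hk').mp htail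
    refine ⟨rfl, _, ⟨decide (k = 3 * x + 3), rfl⟩, ?_⟩
    rw [munion_emptyMapping_right, minsert_emptyMapping]
    obtain rfl | rfl : k = 3 * x + 2 ∨ k = 3 * x + 3 := by omega
    all_goals simp [blockSpan]
  · rintro ⟨rfl, _, ⟨t, rfl⟩, rfl⟩
    refine ⟨(blockSpan x t).2, _, _,
      ⟨_, (rmatch_star_babPow_iff hab hx le_rfl (by omega)).mpr ⟨rfl, ?_, ?_⟩, rfl, rfl⟩,
      (rmatch_star_concat_letter_babPow_iff hab hx ?_ ?_).mpr ⟨rfl, rfl⟩, fun _ => .inr rfl, ?_⟩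
    all_goals cases t <;> simp [blockSpan]

end Gamma1

section Gamma2

variable {a b : Sig} {n : ℕ} {j : ℕ} {μ : VMapping}

lemma rmatch_blockS19_iff (c : List (Fin n × Bool)) (x : Fin n) :
    RMatch (blockS19 a b c x) (babPow a b n) (3 * x + 1) j μ ↔ j = 3 * (x + 1) + 1 ∧
      μ = Function.update emptyMapping x
        ((c.find? fun l => decide (l.1 = x)).map fun l => blockSpan x !l.2) := by
  have h0 := babPow_getElem?_left (a := a) (b := b) x.2
  have h1 := babPow_getElem?_mid (a := a) (b := b) x.2
  have h2 := babPow_getElem?_right (a := a) (b := b) x.2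
  have hlen : 3 * (x : ℕ) < (babPow a b n).length := by rw [length_babPow]; omega
  have hnone : Function.update emptyMapping (x : ℕ) none = emptyMapping :=
    Function.update_eq_self _ _
  rw [show 3 * ((x : ℕ) + 1) + 1 = 3 * x + 1 + 1 + 1 + 1 by ring]
  unfold blockS19
  cases hf : c.find? (fun l => decide (l.1 = x)) with
  | none => simp [babS19, rmatch_letter_concat_iff, rmatch_letter_iff, h0, h1, h2, hnone]
  | some v =>
    cases hv : v.2
    · simp [rmatch_concat_iff, rmatch_letter_iff, rmatch_bind_iff, h0, h1, h2, hv, blockSpan,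
        add_assoc]
    · simp only [hv, if_true]
      rw [rmatch_letter_concat_iff, Nat.add_sub_cancel, h0]
      simp [rmatch_concat_iff, rmatch_letter_iff, rmatch_bind_iff, rmatch_eps_iff, h1, h2, hv,
        hlen, and_comm, blockSpan, add_assoc]

end Gamma2

def assignmentMapping {n : ℕ} (τ : Fin n → Bool) : VMapping :=
  fun x => if h : x < n then some (blockSpan x (τ ⟨x, h⟩)) else none

def clauseMapping {n : ℕ} (c : List (Fin n × Bool)) : VMapping :=
  fun x => if h : x < n then
    (c.find? fun l => decide (l.1 = ⟨x, h⟩)).map fun l => blockSpan x !l.2 else none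

section Semantics

variable {a b : Sig} {n : ℕ} {μ : VMapping}

lemma mem_rgxSem_gamma1S19_iff (hab : a ≠ b) :
    μ ∈ rgxSem (gamma1S19 a b n) (babPow a b n) ↔ ∃ τ : Fin n → Bool, μ = assignmentMapping τ := by
  rw [show gamma1S19 a b n = concatList (List.ofFn fun x : Fin n => gamma1Block a b x) from rfl,
    mem_rgxSem_concatList_ofFn_iff length_babPow _ (fun x => Set.range (some ∘ blockSpan x))
      fun x _ _ => rmatch_gamma1Block_iff hab x.2]
  have hnone (τ : Fin n → Bool) x (hx : n ≤ x) : assignmentMapping τ x = none := by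
    simp [assignmentMapping, hx]
  constructor
  · rintro ⟨o, ho, rfl⟩
    choose τ hτ using fun x : Fin n => ho x x.2
    refine ⟨τ, restrictMap_Ico_zero_eq (fun x hx => ?_) (hnone τ)⟩
    simp [assignmentMapping, hx, ← hτ ⟨x, hx⟩]
  · rintro ⟨τ, rfl⟩
    exact ⟨assignmentMapping τ, fun x hx => ⟨τ ⟨x, hx⟩, by simp [assignmentMapping, hx]⟩,
      (restrictMap_Ico_zero_eq (fun _ _ => rfl) (hnone τ)).symm⟩

lemma mem_rgxSem_gamma2iS19_iff (c : List (Fin n × Bool)) :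
    μ ∈ rgxSem (gamma2iS19 a b c) (babPow a b n) ↔ μ = clauseMapping c := by
  rw [gamma2iS19, mem_rgxSem_concatList_ofFn_iff length_babPow _ (fun x => {clauseMapping c x})
    fun x _ _ => by simpa [clauseMapping] using rmatch_blockS19_iff c x]
  have hnone x (hx : n ≤ x) : clauseMapping c x = none := by simp [clauseMapping, hx]
  constructor
  · rintro ⟨o, ho, rfl⟩
    exact restrictMap_Ico_zero_eq ho hnone
  · rintro rfl
    exact ⟨clauseMapping c, fun _ _ => rfl, (restrictMap_Ico_zero_eq (fun _ _ => rfl) hnone).symm⟩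

lemma mem_rgxSem_gamma2S19_iff (φ : List (List (Fin n × Bool))) :
    μ ∈ rgxSem (gamma2S19 a b φ) (babPow a b n) ↔ ∃ c ∈ φ, μ = clauseMapping c := by
  simp only [rgxSem, gamma2S19, Set.mem_ofPred_eq, rmatch_disjList_iff, List.mem_map,
    exists_exists_and_eq_and]
  exact exists_congr fun c => and_congr_right fun _ => mem_rgxSem_gamma2iS19_iff c

lemma assignmentMapping_apply (τ : Fin n → Bool) (x : Fin n) :
    assignmentMapping τ x = some (blockSpan x (τ x)) := by
  simp [assignmentMapping]

lemma exists_of_clauseMapping_eq_some {c : List (Fin n × Bool)} {x : ℕ} {s : Span}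
    (h : clauseMapping c x = some s) : ∃ l ∈ c, (l.1 : ℕ) = x ∧ s = blockSpan x !l.2 := by
  unfold clauseMapping at h
  split_ifs at h with hx
  obtain ⟨l, hl, rfl⟩ := Option.map_eq_some_iff.mp h
  have hlx : l.1 = ⟨x, hx⟩ := by simpa using List.find?_some hl
  exact ⟨l, List.mem_of_find?_eq_some hl, by rw [hlx], rfl⟩

lemma clauseMapping_of_mem {c : List (Fin n × Bool)} (hc : (c.map Prod.fst).Nodup)
    {l : Fin n × Bool} (hl : l ∈ c) : clauseMapping c l.1 = some (blockSpan l.1 !l.2) := by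
  obtain ⟨l', hl'⟩ : ∃ l', c.find? (fun l' => decide (l'.1 = l.1)) = some l' :=
    Option.isSome_iff_exists.mp (List.find?_isSome.mpr ⟨l, hl, by simp⟩)
  obtain rfl : l' = l := List.inj_on_of_nodup_map hc (List.mem_of_find?_eq_some hl') hl
    (by simpa using List.find?_some hl')
  simp [clauseMapping, hl']

lemma not_compatible_assignmentMapping_clauseMapping_iff (τ : Fin n → Bool)
    {c : List (Fin n × Bool)} (hc : (c.map Prod.fst).Nodup) :
    ¬ Compatible (assignmentMapping τ) (clauseMapping c) ↔ ∃ l ∈ c, τ l.1 = l.2 := by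
  constructor
  · intro h
    by_contra! hall
    refine h fun x s1 s2 h1 h2 => ?_
    obtain ⟨l, hl, rfl, rfl⟩ := exists_of_clauseMapping_eq_some h2
    rw [assignmentMapping_apply] at h1
    rw [← Option.some.inj h1, Bool.eq_not.mpr (hall l hl)]
  · rintro ⟨l, hl, hτ⟩ hcomp
    have := blockSpan_injective _ (hcomp l.1 _ _ (assignmentMapping_apply τ l.1)
      (clauseMapping_of_mem hc hl))
    simp [hτ] at this

end Semantics

section FormulaShape

variable (a b : Sig)

lemma vars_gamma1Block (x : ℕ) : (gamma1Block a b x).vars = {x} := by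
  simp [gamma1Block, RGX.vars]

lemma functional_gamma1Block (x : ℕ) : (gamma1Block a b x).Functional := by
  have hstar : FunctionalFor (.star (.letter a) : RGX Sig) ∅ := .star (.word (.letter a))
  refine .concat (.word (.letter b)) ?_ (by simp [RGX.vars])
  refine .concat (.bind (by simpa [RGX.vars] using hstar)) ?_ (by simp [RGX.vars])
  exact .concat hstar (.word (.letter b)) (by simp [RGX.vars])

lemma functional_gamma1S19 (n : ℕ) : (gamma1S19 a b n).Functional := by
  refine functional_concatList (L := List.ofFn fun x : Fin n => gamma1Block a b x) ?_ ?_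
  · simpa using fun x : Fin n => functional_gamma1Block a b x
  · simpa [List.pairwise_ofFn, vars_gamma1Block] using fun i j hij => Fin.val_ne_of_ne hij.ne

lemma disjFree_blockS19 {n : ℕ} (c : List (Fin n × Bool)) (x : Fin n) :
    (blockS19 a b c x).DisjFree := by
  unfold blockS19
  split
  · split <;> simp [RGX.DisjFree]
  · simp [babS19, RGX.DisjFree]

lemma disjFree_gamma2iS19 {n : ℕ} (c : List (Fin n × Bool)) : (gamma2iS19 a b c).DisjFree :=
  disjFree_concatList (by simpa using disjFree_blockS19 a b c)

lemma exists_mem_of_mem_vars_gamma2iS19 {n : ℕ} {c : List (Fin n × Bool)} {x : Fin n}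
    (h : (x : ℕ) ∈ (gamma2iS19 a b c).vars) : ∃ l ∈ c, l.1 = x := by
  obtain ⟨_, hα, hx⟩ := mem_vars_concatList.mp h
  obtain ⟨y, rfl⟩ := List.mem_ofFn.mp hα
  unfold blockS19 at hx
  split at hx
  · rename_i v hv
    have hxy : (x : ℕ) = y := by split at hx <;> simpa [RGX.vars] using hx
    have hvy : v.1 = y := by simpa using List.find?_some hv
    exact ⟨v, List.mem_of_find?_eq_some hv, hvy.trans (Fin.ext hxy.symm)⟩
  · simp [babS19, RGX.vars] at hx

end FormulaShape

theorem statement19_general (a b : Sig) (hab : a ≠ b) (n : ℕ)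
    (φ : List (List (Fin n × Bool)))
    (hsorted : ∀ c ∈ φ, List.Chain' (· < ·) (c.map Prod.fst))
    (hocc3 : ∀ j : Fin n, (φ.filter fun c => decide (∃ l ∈ c, l.1 = j)).length ≤ 3) :
    (gamma1S19 a b n).Functional ∧
    (∀ c ∈ φ, (gamma2iS19 a b c).DisjFree) ∧
    (∀ j : Fin n,
      (φ.filter fun c => decide ((j : ℕ) ∈ (gamma2iS19 a b c).vars)).length ≤ 3) ∧
    ((diffSet (rgxSem (gamma1S19 a b n) ((List.replicate n [b, a, b]).flatten))
              (rgxSem (gamma2S19 a b φ) ((List.replicate n [b, a, b]).flatten))).Nonempty ↔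
      ∃ τ : Fin n → Bool, ∀ c ∈ φ, ∃ l ∈ c, τ l.1 = l.2) := by
  have hsat (τ : Fin n → Bool) (c) (hc : c ∈ φ) :
      ¬ Compatible (assignmentMapping τ) (clauseMapping c) ↔ ∃ l ∈ c, τ l.1 = l.2 :=
    not_compatible_assignmentMapping_clauseMapping_iff τ
      ((List.isChain_iff_pairwise.mp (hsorted c hc)).imp ne_of_lt)
  refine ⟨functional_gamma1S19 a b n, fun c _ => disjFree_gamma2iS19 a b c, fun j => ?_, ?_⟩
  · refine (List.Sublist.length_le (List.monotone_filter_right φ fun c hc => ?_)).trans (hocc3 j)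
    simpa using exists_mem_of_mem_vars_gamma2iS19 a b (of_decide_eq_true hc)
  · change (diffSet (rgxSem _ (babPow a b n)) (rgxSem _ (babPow a b n))).Nonempty ↔ _
    simp only [Set.Nonempty, diffSet, Set.mem_ofPred_eq, mem_rgxSem_gamma1S19_iff hab,
      mem_rgxSem_gamma2S19_iff]
    constructor
    · rintro ⟨_, ⟨τ, rfl⟩, hτ⟩
      exact ⟨τ, fun c hc => (hsat τ c hc).mp (hτ _ ⟨c, hc, rfl⟩)⟩
    · rintro ⟨τ, hτ⟩
      refine ⟨_, ⟨τ, rfl⟩, ?_⟩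
      rintro _ ⟨c, hc, rfl⟩
      exact (hsat τ c hc).mpr (hτ c hc)

theorem statement19 (a b : Sig) (hab : a ≠ b) (n : ℕ)
    (φ : List (List (Fin n × Bool)))
    (hlen : ∀ c ∈ φ, c.length = 2 ∨ c.length = 3)
    (hsorted : ∀ c ∈ φ, List.Chain' (· < ·) (c.map Prod.fst))
    (hocc3 : ∀ j : Fin n, (φ.filter fun c => decide (∃ l ∈ c, l.1 = j)).length ≤ 3)
    (hocc1 : ∀ j : Fin n, ∃ c ∈ φ, ∃ l ∈ c, l.1 = j) :
    (gamma1S19 a b n).Functional ∧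
    (∀ c ∈ φ, (gamma2iS19 a b c).DisjFree) ∧
    (∀ j : Fin n,
      (φ.filter fun c => decide ((j : ℕ) ∈ (gamma2iS19 a b c).vars)).length ≤ 3) ∧
    ((diffSet (rgxSem (gamma1S19 a b n) ((List.replicate n [b, a, b]).flatten))
              (rgxSem (gamma2S19 a b φ) ((List.replicate n [b, a, b]).flatten))).Nonempty ↔
      ∃ τ : Fin n → Bool, ∀ c ∈ φ, ∃ l ∈ c, τ l.1 = l.2) :=
  statement19_general a b hab n φ hsorted hocc3

end Spanners
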